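/- arXiv:2307.03380 — 5 statements merged into one kernel-verified Lean document; each statement's English description precedes it below -/
import Mathlib

section
/- Hitting-set characterization of weak AXp's: a set X ⊆ F is a weak AXp for the prediction c = κ(v) if and only if X intersects every CXp for c = κ(v), i.e., X ∩ Y ≠ ∅ for every CXp Y. -/
/-- `X` is a weak abductive explanation (weak AXp) for the prediction `κ v`:
fixing the features in `X` to their values in `v` forces the prediction `κ v`. -/
def WeakAXp {m : ℕ} {K : Type*} {D : Fin m → Type*}
    (κ : (∀ i, D i) → K) (v : ∀ i, D i) (X : Finset (Fin m)) : Prop :=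
  ∀ x : ∀ i, D i, (∀ i ∈ X, x i = v i) → κ x = κ v

/-- `Y` is a weak contrastive explanation (weak CXp) for the prediction `κ v`:
some point agreeing with `v` outside `Y` gets a different prediction. -/
def WeakCXp {m : ℕ} {K : Type*} {D : Fin m → Type*}
    (κ : (∀ i, D i) → K) (v : ∀ i, D i) (Y : Finset (Fin m)) : Prop :=
  ∃ x : ∀ i, D i, (∀ i ∉ Y, x i = v i) ∧ κ x ≠ κ v

/-- An AXp is a subset-minimal weak AXp. -/
def AXp {m : ℕ} {K : Type*} {D : Fin m → Type*}
    (κ : (∀ i, D i) → K) (v : ∀ i, D i) (X : Finset (Fin m)) : Prop :=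
  WeakAXp κ v X ∧ ∀ X' ⊂ X, ¬ WeakAXp κ v X'

/-- A CXp is a subset-minimal weak CXp. -/
def CXp {m : ℕ} {K : Type*} {D : Fin m → Type*}
    (κ : (∀ i, D i) → K) (v : ∀ i, D i) (Y : Finset (Fin m)) : Prop :=
  WeakCXp κ v Y ∧ ∀ Y' ⊂ Y, ¬ WeakCXp κ v Y'

lemma exists_CXp_subset {m : ℕ} {K : Type*} {D : Fin m → Type*}
    (κ : (∀ i, D i) → K) (v : ∀ i, D i) :
    ∀ Y : Finset (Fin m), WeakCXp κ v Y → ∃ Z ⊆ Y, CXp κ v Z := by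
  intro Y
  induction Y using Finset.strongInductionOn with
  | _ Y ih =>
    intro hY
    by_cases hmin : ∀ Y' ⊂ Y, ¬ WeakCXp κ v Y'
    · exact ⟨Y, le_refl _, hY, hmin⟩
    · push_neg at hmin
      obtain ⟨Y', hY'Y, hY'⟩ := hmin
      obtain ⟨Z, hZ, hZC⟩ := ih Y' hY'Y hY'
      exact ⟨Z, hZ.trans hY'Y.subset, hZC⟩

/-- `X` is a weak AXp iff it intersects every CXp. -/
theorem weakAXp_iff_hits_CXps {m : ℕ} {K : Type*} {D : Fin m → Type*} [∀ i, Nonempty (D i)]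
    (κ : (∀ i, D i) → K) (v : ∀ i, D i) (X : Finset (Fin m)) :
    WeakAXp κ v X ↔ ∀ Y : Finset (Fin m), CXp κ v Y → (X ∩ Y).Nonempty := by
  constructor
  · intro hX Y hY
    by_contra hempty
    obtain ⟨x, hx, hne⟩ := hY.1
    exact hne (hX x fun i hi => hx i (fun hiY => by
      simp [Finset.not_nonempty_iff_eq_empty, Finset.eq_empty_iff_forall_notMem] at hempty
      exact hempty i hi hiY))
  · intro h x hx
    by_contra hne
    have hW : WeakCXp κ v Xᶜ := ⟨x, fun i hi => hx i (by simpa using hi), hne⟩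
    obtain ⟨Z, hZ, hZC⟩ := exists_CXp_subset κ v _ hW
    obtain ⟨i, hi⟩ := h Z hZC
    simp only [Finset.mem_inter] at hi
    have := hZ hi.2
    simp at this
    exact this hi.1
end

section
/- Hitting-set characterization of weak CXp's: a set Y ⊆ F is a weak CXp for the prediction c = κ(v) if and only if Y intersects every AXp for c = κ(v), i.e., Y ∩ X ≠ ∅ for every AXp X. -/
lemma exists_AXp_subset {m : ℕ} {K : Type*} {D : Fin m → Type*}
    (κ : (∀ i, D i) → K) (v : ∀ i, D i) (X : Finset (Fin m)) (h : WeakAXp κ v X) :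
    ∃ X' ⊆ X, AXp κ v X' := by
  induction X using Finset.strongInductionOn with
  | _ X ih =>
    by_cases hmin : ∀ X' ⊂ X, ¬ WeakAXp κ v X'
    · exact ⟨X, le_refl X, h, hmin⟩
    · push_neg at hmin
      obtain ⟨X', hsub, hw⟩ := hmin
      obtain ⟨X'', hsub', hax⟩ := ih X' hsub hw
      exact ⟨X'', hsub'.trans hsub.subset, hax⟩

/-- `Y` is a weak CXp iff it intersects every AXp. -/
theorem weakCXp_iff_hits_AXps {m : ℕ} {K : Type*} {D : Fin m → Type*} [∀ i, Nonempty (D i)]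
    (κ : (∀ i, D i) → K) (v : ∀ i, D i) (Y : Finset (Fin m)) :
    WeakCXp κ v Y ↔ ∀ X : Finset (Fin m), AXp κ v X → (Y ∩ X).Nonempty := by
  constructor
  · rintro ⟨x, hx, hne⟩ X ⟨hwX, -⟩
    by_contra hempty
    rw [Finset.not_nonempty_iff_eq_empty] at hempty
    exact hne (hwX x fun i hi => hx i fun hiY =>
      (Finset.notMem_empty i (hempty ▸ Finset.mem_inter.2 ⟨hiY, hi⟩)))
  · intro hall
    by_contra hnc
    have hw : WeakAXp κ v Yᶜ := by
      intro x hx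
      by_contra hne
      exact hnc ⟨x, fun i hi => hx i (Finset.mem_compl.2 hi), hne⟩
    obtain ⟨X, hsub, hax⟩ := exists_AXp_subset κ v Yᶜ hw
    obtain ⟨i, hi⟩ := hall X hax
    rw [Finset.mem_inter] at hi
    exact Finset.mem_compl.1 (hsub hi.2) hi.1
end

section
/- Minimal hitting set duality, first direction: a set X ⊆ F is an AXp for the prediction c = κ(v) if and only if X is a minimal hitting set of the set ℂ of all CXp's for c = κ(v). -/
/-- `H` is a hitting set of the family `S`: it intersects every member of `S`. -/
def HittingSet {m : ℕ} (H : Finset (Fin m)) (S : Set (Finset (Fin m))) : Prop :=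
  ∀ S' ∈ S, (H ∩ S').Nonempty

/-- `H` is a minimal hitting set of `S`: a hitting set no proper subset of
which is a hitting set. -/
def MinimalHittingSet {m : ℕ} (H : Finset (Fin m)) (S : Set (Finset (Fin m))) : Prop :=
  HittingSet H S ∧ ∀ H' ⊂ H, ¬ HittingSet H' S

lemma weakAXp_iff_hitting {m : ℕ} {K : Type*} {D : Fin m → Type*}
    (κ : (∀ i, D i) → K) (v : ∀ i, D i) (X : Finset (Fin m)) :
    WeakAXp κ v X ↔ HittingSet X {Y : Finset (Fin m) | CXp κ v Y} := by
  constructor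
  · intro hX Y hY
    obtain ⟨⟨x, hx, hne⟩, -⟩ := hY
    by_contra hns
    rw [Finset.not_nonempty_iff_eq_empty] at hns
    exact hne (hX x fun i hi => hx i (fun hiY =>
      (Finset.eq_empty_iff_forall_notMem.mp hns i (Finset.mem_inter.mpr ⟨hi, hiY⟩))))
  · intro hH x hx
    by_contra hne
    have hw : WeakCXp κ v (Finset.univ \ X) := by
      refine ⟨x, fun i hi => ?_, hne⟩
      simp only [Finset.mem_sdiff, Finset.mem_univ, true_and, not_not] at hi
      exact hx i hi
    obtain ⟨Z, hZ, hZc⟩ := exists_CXp_subset κ v _ hw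
    obtain ⟨i, hi⟩ := hH Z hZc
    rw [Finset.mem_inter] at hi
    have := hZ hi.2
    simp only [Finset.mem_sdiff] at this
    exact this.2 hi.1

/-- Minimal hitting set duality, first direction: `X` is an AXp iff it is a
minimal hitting set of the set ℂ of all CXp's. -/
theorem AXp_iff_minimalHittingSet_CXps {m : ℕ} {K : Type*} {D : Fin m → Type*}
    [∀ i, Nonempty (D i)]
    (κ : (∀ i, D i) → K) (v : ∀ i, D i) (X : Finset (Fin m)) :
    AXp κ v X ↔ MinimalHittingSet X {Y : Finset (Fin m) | CXp κ v Y} := by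
  unfold AXp MinimalHittingSet
  simp only [weakAXp_iff_hitting]
end

section
/- Conversion identity between FFA and WFFA: if κ is not a constant function, then ∑_{i∈F} ffa_κ(i,(v,c)) = ((∑_{X∈𝔸} |X|) / |𝔸|) · ∑_{i∈F} wffa_κ(i,(v,c)). -/
open scoped Classical in
/-- The (finite) set 𝔸 of all AXp's for the instance `(v, κ v)`. -/
noncomputable def AXps {m : ℕ} {K : Type*} {D : Fin m → Type*}
    (κ : (∀ i, D i) → K) (v : ∀ i, D i) : Finset (Finset (Fin m)) :=
  Finset.univ.filter (AXp κ v)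

/-- Formal feature attribution: the proportion of AXp's containing feature `i`. -/
noncomputable def ffa {m : ℕ} {K : Type*} {D : Fin m → Type*}
    (κ : (∀ i, D i) → K) (v : ∀ i, D i) (i : Fin m) : ℚ :=
  (((AXps κ v).filter (fun X => i ∈ X)).card : ℚ) / ((AXps κ v).card : ℚ)

/-- Weighted formal feature attribution of feature `i`. -/
noncomputable def wffa {m : ℕ} {K : Type*} {D : Fin m → Type*}
    (κ : (∀ i, D i) → K) (v : ∀ i, D i) (i : Fin m) : ℚ :=
  (∑ X ∈ (AXps κ v).filter (fun X => i ∈ X), ((X.card : ℚ))⁻¹) / ((AXps κ v).card : ℚ)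

/-- Conversion identity between FFA and WFFA. -/
theorem sum_ffa_eq_avg_length_mul_sum_wffa {m : ℕ} {K : Type*} {D : Fin m → Type*}
    [∀ i, Nonempty (D i)]
    (κ : (∀ i, D i) → K) (v : ∀ i, D i)
    (hκ : ¬ ∀ x y : ∀ i, D i, κ x = κ y) :
    ∑ i : Fin m, ffa κ v i
      = ((∑ X ∈ AXps κ v, (X.card : ℚ)) / ((AXps κ v).card : ℚ))
          * ∑ i : Fin m, wffa κ v i := by
  classical
  set A := AXps κ v with hAdef
  -- A is nonempty
  have huniv : WeakAXp κ v Finset.univ := by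
    intro x hx
    have : x = v := funext fun i => hx i (Finset.mem_univ i)
    rw [this]
  have hAne : A.Nonempty := by
    have hs : (Finset.univ.filter (WeakAXp κ v) : Finset (Finset (Fin m))).Nonempty :=
      ⟨Finset.univ, by simp [huniv]⟩
    obtain ⟨X, hXmem, hXmin⟩ : ∃ X ∈ (Finset.univ.filter (WeakAXp κ v) : Finset (Finset (Fin m))),
        ∀ X' ∈ (Finset.univ.filter (WeakAXp κ v) : Finset (Finset (Fin m))), ¬ X' < X := by
      obtain ⟨X, h1, h2⟩ := Finset.exists_minimal hs
      exact ⟨X, h1, fun X' h3 h4 => h4.not_ge (h2 h3 h4.le)⟩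
    refine ⟨X, ?_⟩
    simp only [Finset.mem_filter, Finset.mem_univ, true_and] at hXmem
    simp only [hAdef, AXps, Finset.mem_filter, Finset.mem_univ, true_and]
    exact ⟨hXmem, fun X' hX' hW => hXmin X' (by simp [hW]) hX'⟩
  -- every AXp is nonempty
  have hcard : ∀ X ∈ A, (X.card : ℚ) ≠ 0 := by
    intro X hX
    simp only [hAdef, AXps, Finset.mem_filter, Finset.mem_univ, true_and] at hX
    intro h
    have hX0 : X = ∅ := Finset.card_eq_zero.mp (by exact_mod_cast h)
    subst hX0
    apply hκ
    intro x y
    have hx := hX.1 x (by simp)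
    have hy := hX.1 y (by simp)
    rw [hx, hy]
  have hAcard : ((A.card : ℚ)) ≠ 0 := by
    have h := Finset.card_pos.mpr hAne
    exact_mod_cast Nat.pos_iff_ne_zero.mp h
  have key1 : ∑ i : Fin m, ((A.filter (fun X => i ∈ X)).card : ℚ)
      = ∑ X ∈ A, (X.card : ℚ) := by
    have : ∀ i : Fin m, ((A.filter (fun X => i ∈ X)).card : ℚ)
        = ∑ X ∈ A, (if i ∈ X then (1:ℚ) else 0) := by
      intro i
      rw [Finset.card_filter]
      push_cast
      rfl
    rw [Finset.sum_congr rfl (fun i _ => this i)]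
    rw [Finset.sum_comm]
    refine Finset.sum_congr rfl fun X _ => ?_
    rw [Finset.sum_ite_mem, Finset.univ_inter, Finset.sum_const, nsmul_eq_mul, mul_one]
  have key2 : ∑ i : Fin m, ∑ X ∈ A.filter (fun X => i ∈ X), ((X.card : ℚ))⁻¹
      = (A.card : ℚ) := by
    have : ∀ i : Fin m, ∑ X ∈ A.filter (fun X => i ∈ X), ((X.card : ℚ))⁻¹
        = ∑ X ∈ A, (if i ∈ X then ((X.card : ℚ))⁻¹ else 0) := fun i =>
      Finset.sum_filter _ _
    simp_rw [this]
    rw [Finset.sum_comm]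
    have : ∀ X ∈ A, ∑ i : Fin m, (if i ∈ X then ((X.card : ℚ))⁻¹ else 0) = 1 := by
      intro X hX
      rw [Finset.sum_ite_mem, Finset.inter_comm, Finset.inter_univ,
        Finset.sum_const, nsmul_eq_mul]
      exact mul_inv_cancel₀ (hcard X hX)
    rw [Finset.sum_congr rfl this, Finset.sum_const, nsmul_eq_mul, mul_one]
  unfold ffa wffa
  rw [← Finset.sum_div, ← Finset.sum_div, ← hAdef] at *
  rw [key1, key2, div_self hAcard, mul_one]
end

section
/- A feature i is relevant for the prediction c = κ(v) (belongs to some AXp) if and only if i belongs to some weak AXp X such that X \ {i} is not a weak AXp. -/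
/-- `i` is relevant (belongs to some AXp) iff `i` belongs to some weak AXp `X`
such that `X \ {i}` is not a weak AXp. -/
theorem relevant_iff_exists_weakAXp {m : ℕ} {K : Type*} {D : Fin m → Type*}
    [∀ i, Nonempty (D i)]
    (κ : (∀ i, D i) → K) (v : ∀ i, D i) (i : Fin m) :
    (∃ X : Finset (Fin m), AXp κ v X ∧ i ∈ X)
      ↔ ∃ X : Finset (Fin m), i ∈ X ∧ WeakAXp κ v X ∧ ¬ WeakAXp κ v (X.erase i) := by
  have mono : ∀ {A B : Finset (Fin m)}, A ⊆ B → WeakAXp κ v A → WeakAXp κ v B := by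
    intro A B hAB hA x hx
    exact hA x (fun j hj => hx j (hAB hj))
  constructor
  · rintro ⟨X, ⟨hw, hmin⟩, hi⟩
    exact ⟨X, hi, hw, hmin _ (Finset.erase_ssubset hi)⟩
  · rintro ⟨X, hi, hw, hne⟩
    -- strong induction on card
    obtain ⟨n, hn⟩ : ∃ n, X.card = n := ⟨X.card, rfl⟩
    induction n using Nat.strong_induction_on generalizing X with
    | _ n ih =>
      by_cases hax : ∀ X' ⊂ X, ¬ WeakAXp κ v X'
      · exact ⟨X, ⟨hw, hax⟩, hi⟩
      · push_neg at hax
        obtain ⟨X', hsub, hw'⟩ := hax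
        have hiX' : i ∈ X' := by
          by_contra h
          exact hne (mono (fun j hj => Finset.mem_erase.mpr
            ⟨fun he => h (he ▸ hj), hsub.subset hj⟩) hw')
        have hne' : ¬ WeakAXp κ v (X'.erase i) :=
          fun h => hne (mono (Finset.erase_subset_erase i hsub.subset) h)
        subst hn
        exact ih X'.card (Finset.card_lt_card hsub) X' hiX' hw' hne' rfl
end
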